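/- arXiv:1511.05121 — 2 statements merged into one kernel-verified Lean document; each statement's English description precedes it below -/
import Mathlib

section
/- In the state-space model, fix an observation sequence x = (x₁,…,x_T) and suppose that each future weight W_t(z) is finite for all z ∈ Z, that the evidence satisfies 0 < m(x) < ∞, and that W_{t-1}(z_{t-1}) ∈ (0,∞) for t = 2,…,T at the points considered. Then for every latent trajectory z = (z₁,…,z_T) the posterior density factorizes as π(z, x)/m(x) = [f₁(z₁) g₁(z₁, x₁) W₁(z₁) / m(x)] · ∏_{t=2}^{T} [f_t(z_{t-1}, z_t) g_t(z_t, x_t) W_t(z_t) / W_{t-1}(z_{t-1})]. In particular, the t-th conditional factor of the posterior depends only on z_{t-1} and on the present and future observations x_t,…,x_T (the fixed actions u_{t-1},…,u_{T-1} having been absorbed into the transition densities), and not on x₁,…,x_{t-1}; this is the factorization p(z⃗|x⃗,u⃗) = p(z₁|x⃗,u⃗)·∏_{t=2}^{T} p(z_t|z_{t-1}, x_t,…,x_T, u_{t-1},…,u_{T-1}) of Theorem 1. -/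
/-!
STATEMENT 0: Posterior factorization in the state-space model (Theorem 1 of the paper).

Context: sequences have length `T + 1 ≥ 1`, indexed by `Fin (T+1)` (paper index `t`
corresponds to `Fin`-index `t - 1`).  `Z` and `X` are measurable spaces with σ-finite
measures `μ` and `ν`.  Densities are valued in `[0,∞)`, modelled by `ℝ≥0`:
an initial density `f1`, transition densities `f t` for `t ≠ 0` (actions absorbed), and
emission densities `g t`.  The joint density is
`π(z,x) = f1 z₀ · ∏_{t≠0} f t (z_{t-1}) (z_t) · ∏_t g t (z_t) (x_t)`,
the future weight `W_t(z)` integrates the terms with index `> t` over the tail variables,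
with the `t`-th latent coordinate fixed to `z`, and the evidence is `m(x) = ∫ π(z,x) dz`.
-/

open MeasureTheory Finset
open scoped ENNReal NNReal

/-- The index `t - 1` (truncated at `0`). -/
def prevFin {n : ℕ} (t : Fin n) : Fin n :=
  ⟨t.1 - 1, lt_of_le_of_lt (Nat.sub_le _ _) t.2⟩

/-- Joint density `π(z, x)` of latent states and observations. -/
noncomputable def jointDensity {Z X : Type*} {T : ℕ}
    (f1 : Z → ℝ≥0) (f : Fin (T + 1) → Z → Z → ℝ≥0) (g : Fin (T + 1) → Z → X → ℝ≥0)
    (z : Fin (T + 1) → Z) (x : Fin (T + 1) → X) : ℝ≥0∞ :=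
  (f1 (z 0) : ℝ≥0∞) *
    (∏ t ∈ Finset.univ.filter (fun t : Fin (T + 1) => t ≠ 0),
      (f t (z (prevFin t)) (z t) : ℝ≥0∞)) *
    ∏ t, (g t (z t) (x t) : ℝ≥0∞)

/-- Replace the coordinates of `z` with index `> t` by the values of `w`. -/
def spliceTail {Z : Type*} {T : ℕ} (t : Fin (T + 1)) (z : Fin (T + 1) → Z)
    (w : {s : Fin (T + 1) // t < s} → Z) : Fin (T + 1) → Z :=
  fun s => if h : t < s then w ⟨s, h⟩ else z s

/-- The future weight
`W_t(z) = ∫ ∏_{s > t} f s (z_{s-1}) (z_s) · g s (z_s) (x_s) dμ^{⊗(T−t)}(z_{t+1},…,z_T)`,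
evaluated with the `t`-th latent coordinate equal to `z`.  (For `t` the last index the
integral is over an empty product space and `W_T ≡ 1`.) -/
noncomputable def futureWeight {Z X : Type*} [MeasurableSpace Z] {T : ℕ}
    (μ : Measure Z) (f : Fin (T + 1) → Z → Z → ℝ≥0) (g : Fin (T + 1) → Z → X → ℝ≥0)
    (x : Fin (T + 1) → X) (t : Fin (T + 1)) (zt : Z) : ℝ≥0∞ :=
  ∫⁻ w : {s : Fin (T + 1) // t < s} → Z,
    ∏ s ∈ Finset.univ.filter (fun s : Fin (T + 1) => t < s),
      (f s (spliceTail t (fun _ => zt) w (prevFin s)) (spliceTail t (fun _ => zt) w s) : ℝ≥0∞) *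
        (g s (spliceTail t (fun _ => zt) w s) (x s) : ℝ≥0∞)
    ∂(Measure.pi fun _ => μ)

/-- The evidence `m(x) = ∫ π(z, x) dμ^{⊗T}(z)`. -/
noncomputable def evidence {Z X : Type*} [MeasurableSpace Z] {T : ℕ}
    (μ : Measure Z) (f1 : Z → ℝ≥0) (f : Fin (T + 1) → Z → Z → ℝ≥0)
    (g : Fin (T + 1) → Z → X → ℝ≥0) (x : Fin (T + 1) → X) : ℝ≥0∞ :=
  ∫⁻ z : Fin (T + 1) → Z, jointDensity f1 f g z x ∂(Measure.pi fun _ => μ)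

lemma futureWeight_last {Z X : Type*} [MeasurableSpace Z] {T : ℕ}
    (μ : Measure Z) [SigmaFinite μ] (f : Fin (T + 1) → Z → Z → ℝ≥0)
    (g : Fin (T + 1) → Z → X → ℝ≥0) (x : Fin (T + 1) → X) (zt : Z) :
    futureWeight μ f g x (Fin.last T) zt = 1 := by
  haveI hE : IsEmpty {s : Fin (T + 1) // Fin.last T < s} :=
    ⟨fun s => absurd s.2 (not_lt.mpr (Fin.le_last s.1))⟩
  unfold futureWeight
  have h : Finset.univ.filter (fun s : Fin (T + 1) => Fin.last T < s) = ∅ := by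
    simp [Finset.filter_eq_empty_iff, not_lt, Fin.le_last]
  rw [h]
  simp only [Finset.prod_empty]
  rw [lintegral_one, Measure.pi_univ]
  simp

/-- Posterior factorization: for every latent trajectory `z`,
`π(z,x)/m(x) = [f₁(z₁)g₁(z₁,x₁)W₁(z₁)/m(x)] · ∏_{t=2}^{T}
[f_t(z_{t-1},z_t) g_t(z_t,x_t) W_t(z_t) / W_{t-1}(z_{t-1})]`,
so the `t`-th conditional factor depends only on `z_{t-1}` and `x_t,…,x_T`. -/
theorem stmt_0 {Z X : Type*} [MeasurableSpace Z] [MeasurableSpace X] {T : ℕ}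
    (μ : Measure Z) (ν : Measure X) [SigmaFinite μ] [SigmaFinite ν]
    (f1 : Z → ℝ≥0) (f : Fin (T + 1) → Z → Z → ℝ≥0) (g : Fin (T + 1) → Z → X → ℝ≥0)
    (hf1 : Measurable f1) (hf : ∀ t, Measurable (Function.uncurry (f t)))
    (hg : ∀ t, Measurable (Function.uncurry (g t)))
    (x : Fin (T + 1) → X)
    (hW_fin : ∀ (t : Fin (T + 1)) (zt : Z), futureWeight μ f g x t zt ≠ ∞)
    (hm_pos : evidence μ f1 f g x ≠ 0) (hm_fin : evidence μ f1 f g x ≠ ∞)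
    (z : Fin (T + 1) → Z)
    (hW_pos : ∀ t : Fin (T + 1), t ≠ 0 →
      futureWeight μ f g x (prevFin t) (z (prevFin t)) ≠ 0) :
    jointDensity f1 f g z x / evidence μ f1 f g x =
      (f1 (z 0) : ℝ≥0∞) * (g 0 (z 0) (x 0) : ℝ≥0∞) * futureWeight μ f g x 0 (z 0) /
          evidence μ f1 f g x *
        ∏ t ∈ Finset.univ.filter (fun t : Fin (T + 1) => t ≠ 0),
          (f t (z (prevFin t)) (z t) : ℝ≥0∞) * (g t (z t) (x t) : ℝ≥0∞) *
              futureWeight μ f g x t (z t) /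
            futureWeight μ f g x (prevFin t) (z (prevFin t)) := by
  classical
  set W : Fin (T + 1) → ℝ≥0∞ := fun t => futureWeight μ f g x t (z t) with hWdef
  have hWfin : ∀ t, W t ≠ ∞ := fun t => hW_fin t (z t)
  -- basic Fin facts
  have hval : ∀ t : Fin (T + 1), t ≠ Fin.last T → ((t + 1 : Fin (T + 1))).1 = t.1 + 1 := by
    intro t ht
    have htv : t.1 < T :=
      lt_of_le_of_ne (Nat.lt_succ_iff.mp t.2) (fun h => ht (Fin.ext h))
    have h1 : (1 : Fin (T + 1)).1 = 1 % (T + 1) := rfl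
    simp [Fin.add_def, h1, Nat.mod_eq_of_lt (Nat.succ_lt_succ htv),
      Nat.mod_eq_of_lt (by omega : 1 < T + 1)]
  have hne : ∀ t : Fin (T + 1), t ≠ Fin.last T → W t ≠ 0 := by
    intro t ht
    have h1 : (t + 1 : Fin (T + 1)) ≠ 0 := by
      intro h
      have := hval t ht
      rw [h] at this
      simp at this
    have h2 : prevFin (t + 1) = t := by
      apply Fin.ext
      simp [prevFin, hval t ht]
    have := hW_pos (t + 1) h1
    rwa [h2] at this
  have hprev_mem : ∀ t : Fin (T + 1), t ≠ 0 → prevFin t ≠ Fin.last T := by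
    intro t ht
    have htpos : 0 < t.1 := Nat.pos_of_ne_zero (fun h => ht (Fin.ext h))
    intro h
    have : (prevFin t).1 = T := congrArg Fin.val h
    have h2 : t.1 - 1 = T := this
    have := Nat.lt_succ_iff.mp t.2
    omega
  -- telescoping
  have hreindex :
      (∏ t ∈ Finset.univ.filter (fun t : Fin (T + 1) => t ≠ 0), W (prevFin t)) =
        ∏ s ∈ Finset.univ.filter (fun s : Fin (T + 1) => s ≠ Fin.last T), W s := by
    refine Finset.prod_nbij' prevFin (fun s => s + 1) ?_ ?_ ?_ ?_ ?_
    · intro t htm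
      simp only [Finset.mem_filter, Finset.mem_univ, true_and] at htm ⊢
      exact hprev_mem t htm
    · intro s hsm
      simp only [Finset.mem_filter, Finset.mem_univ, true_and] at hsm ⊢
      intro h
      have := hval s hsm
      rw [h] at this
      simp at this
    · intro t htm
      simp only [Finset.mem_filter, Finset.mem_univ, true_and] at htm
      have htpos : 0 < t.1 := Nat.pos_of_ne_zero (fun h => htm (Fin.ext h))
      apply Fin.ext
      rw [hval (prevFin t) (hprev_mem t htm)]
      simp [prevFin]
      omega
    · intro s hsm
      simp only [Finset.mem_filter, Finset.mem_univ, true_and] at hsm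
      apply Fin.ext
      simp [prevFin, hval s hsm]
    · intro t _; rfl
  have hWlast : W (Fin.last T) = 1 := futureWeight_last μ f g x (z (Fin.last T))
  have htel : W 0 * ∏ t ∈ Finset.univ.filter (fun t : Fin (T + 1) => t ≠ 0), W t =
      ∏ t ∈ Finset.univ.filter (fun t : Fin (T + 1) => t ≠ 0), W (prevFin t) := by
    rw [hreindex, Finset.filter_ne', Finset.filter_ne',
      Finset.mul_prod_erase Finset.univ W (Finset.mem_univ 0),
      ← Finset.mul_prod_erase Finset.univ W (Finset.mem_univ (Fin.last T)), hWlast, one_mul]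
  -- abbreviations
  set s0 : Finset (Fin (T + 1)) := Finset.univ.filter (fun t : Fin (T + 1) => t ≠ 0) with hs0
  set B : ℝ≥0∞ := ∏ t ∈ s0, W (prevFin t) with hB
  have hB0 : B ≠ 0 := by
    rw [hB]
    rw [Finset.prod_ne_zero_iff]
    intro t htm
    simp only [hs0, Finset.mem_filter, Finset.mem_univ, true_and] at htm
    exact hne (prevFin t) (hprev_mem t htm)
  have hBtop : B ≠ ∞ := ENNReal.prod_ne_top (fun t _ => hWfin (prevFin t))
  -- the product with divisions times B
  have hPB : (∏ t ∈ s0, (f t (z (prevFin t)) (z t) : ℝ≥0∞) * (g t (z t) (x t) : ℝ≥0∞) *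
        W t / W (prevFin t)) * B =
      ∏ t ∈ s0, (f t (z (prevFin t)) (z t) : ℝ≥0∞) * (g t (z t) (x t) : ℝ≥0∞) * W t := by
    rw [hB, ← Finset.prod_mul_distrib]
    refine Finset.prod_congr rfl fun t htm => ?_
    simp only [hs0, Finset.mem_filter, Finset.mem_univ, true_and] at htm
    exact ENNReal.div_mul_cancel (hne (prevFin t) (hprev_mem t htm)) (hWfin (prevFin t))
  -- main algebraic identity
  have hkey : jointDensity f1 f g z x =
      (f1 (z 0) : ℝ≥0∞) * (g 0 (z 0) (x 0) : ℝ≥0∞) * W 0 *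
        ∏ t ∈ s0, (f t (z (prevFin t)) (z t) : ℝ≥0∞) * (g t (z t) (x t) : ℝ≥0∞) *
          W t / W (prevFin t) := by
    have hcancel : ∀ a b : ℝ≥0∞, a * B = b * B → a = b := by
      intro a b h
      have : a * B * B⁻¹ = b * B * B⁻¹ := by rw [h]
      rwa [mul_assoc, mul_assoc, ENNReal.mul_inv_cancel hB0 hBtop, mul_one, mul_one] at this
    apply hcancel
    rw [mul_assoc, hPB]
    have hg_split : (∏ t, (g t (z t) (x t) : ℝ≥0∞)) =
        (g 0 (z 0) (x 0) : ℝ≥0∞) * ∏ t ∈ s0, (g t (z t) (x t) : ℝ≥0∞) := by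
      rw [hs0, Finset.filter_ne',
        Finset.mul_prod_erase Finset.univ (fun t => (g t (z t) (x t) : ℝ≥0∞))
          (Finset.mem_univ 0)]
    rw [jointDensity, hg_split, ← hs0]
    have hsplit : (∏ t ∈ s0, (f t (z (prevFin t)) (z t) : ℝ≥0∞) *
          (g t (z t) (x t) : ℝ≥0∞) * W t) =
        (∏ t ∈ s0, (f t (z (prevFin t)) (z t) : ℝ≥0∞)) *
          (∏ t ∈ s0, (g t (z t) (x t) : ℝ≥0∞)) * ∏ t ∈ s0, W t := by
      rw [← Finset.prod_mul_distrib, ← Finset.prod_mul_distrib]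
    rw [hsplit, ← htel]
    ring
  rw [hkey]
  simp only [hWdef]
  rw [div_eq_mul_inv, div_eq_mul_inv]
  ring
end

section
/- Assume that f > 0 holds q-almost everywhere and that z ↦ log f(z) and z ↦ log (dq/dp₀)(z) are q-integrable. Let π be the posterior probability measure on Z defined by dπ/dp₀ = f / ∫_Z f dp₀. Then q is absolutely continuous with respect to π, the function log (dq/dπ) is q-integrable, and log ∫_Z f dp₀ − ( ∫_Z log f dq − KL(q‖p₀) ) = KL(q‖π). In particular, the variational lower bound ∫ log f dq − KL(q‖p₀) equals the log-evidence log ∫ f dp₀ if and only if KL(q‖π) = 0, which holds if and only if q = π. -/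
/-!
Since `dπ/dp₀ = f / ∫ f dp₀` is positive `q`-a.e., the chain rule for Radon–Nikodym
derivatives gives `log (dq/dπ) = log (dq/dp₀) - log f + log ∫ f dp₀` `q`-a.e.; integrating
against `q` yields the identity. As `q` and `π` are both probability measures, `KL(q‖π)` is
Mathlib's `klDiv q π`, which vanishes exactly when `q = π` (converse Gibbs inequality).
-/

open MeasureTheory

/-- Kullback–Leibler divergence `KL(q‖p) = ∫ log (dq/dp) dq` (real-valued, for the
absolutely continuous, integrable case). -/
noncomputable def klReal {Z : Type*} [MeasurableSpace Z] (q p : Measure Z) : ℝ :=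
  ∫ z, Real.log ((q.rnDeriv p) z).toReal ∂q

/-- The posterior measure `π` with `dπ/dp₀ = f / ∫ f dp₀`. -/
noncomputable def posterior {Z : Type*} [MeasurableSpace Z] (p₀ : Measure Z) (f : Z → ℝ) :
    Measure Z :=
  p₀.withDensity fun z => ENNReal.ofReal (f z / ∫ z', f z' ∂p₀)

open scoped ENNReal
open InformationTheory

section General

variable {α : Type*} [MeasurableSpace α] {μ ν : Measure α} {g : α → ℝ≥0∞}

lemma absolutelyContinuous_withDensity_of_ae_ne_zero (hg : Measurable g) (hμν : μ ≪ ν)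
    (hg_ne_zero : ∀ᵐ x ∂μ, g x ≠ 0) : μ ≪ ν.withDensity g := by
  refine Measure.AbsolutelyContinuous.mk fun s hs hνs => ?_
  rw [withDensity_apply _ hs, lintegral_eq_zero_iff hg, Filter.EventuallyEq,
    ae_restrict_iff' hs] at hνs
  rw [measure_eq_zero_iff_ae_notMem]
  filter_upwards [hμν.ae_le hνs, hg_ne_zero] with x hx_zero hx_ne_zero hx
  exact hx_ne_zero (hx_zero hx)

lemma llr_withDensity_right_ae_eq [SigmaFinite μ] [SigmaFinite ν]
    [SigmaFinite (ν.withDensity g)] (hg : Measurable g) (hμν : μ ≪ ν)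
    (hg_ne_zero : ∀ᵐ x ∂μ, g x ≠ 0) (hg_ne_top : ∀ᵐ x ∂μ, g x ≠ ∞) :
    llr μ (ν.withDensity g) =ᵐ[μ] fun x => llr μ ν x - Real.log (g x).toReal := by
  have hμ := absolutelyContinuous_withDensity_of_ae_ne_zero hg hμν hg_ne_zero
  filter_upwards [hμν.ae_le (Measure.rnDeriv_mul_rnDeriv hμ),
    hμν.ae_le (Measure.rnDeriv_withDensity ν hg), Measure.rnDeriv_pos hμ,
    hμ.ae_le (Measure.rnDeriv_lt_top μ _), hg_ne_zero, hg_ne_top]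
    with x h_chain h_density h_pos h_lt_top h_ne_zero h_ne_top
  rw [llr, llr, ← h_chain, Pi.mul_apply, h_density, ENNReal.toReal_mul,
    Real.log_mul (ENNReal.toReal_pos h_pos.ne' h_lt_top.ne).ne'
      (ENNReal.toReal_pos h_ne_zero h_ne_top).ne']
  ring

lemma ae_ofReal_div_ne_zero {f : α → ℝ} {c : ℝ} (hc : 0 < c)
    (hf_pos : ∀ᵐ x ∂μ, 0 < f x) : ∀ᵐ x ∂μ, ENNReal.ofReal (f x / c) ≠ 0 :=
  hf_pos.mono fun _ hx => (ENNReal.ofReal_pos.mpr (div_pos hx hc)).ne'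

lemma klReal_eq_zero_iff [IsFiniteMeasure μ] [IsFiniteMeasure ν] (hμν : μ ≪ ν)
    (h_univ : μ Set.univ = ν Set.univ) (h_int : Integrable (llr μ ν) μ) :
    klReal μ ν = 0 ↔ μ = ν := by
  rw [← klDiv_eq_zero_iff, klReal, ← llr_def, ← toReal_klDiv_of_measure_eq hμν h_univ,
    ENNReal.toReal_eq_zero_iff, or_iff_left (klDiv_ne_top hμν h_int)]

end General

section Posterior

variable {Z : Type*} [MeasurableSpace Z] {p₀ q : Measure Z} {f : Z → ℝ}

lemma isProbabilityMeasure_posterior (hf_nonneg : 0 ≤ᵐ[p₀] f) (hf_int : Integrable f p₀)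
    (hf_ev_pos : 0 < ∫ z, f z ∂p₀) : IsProbabilityMeasure (posterior p₀ f) := by
  constructor
  rw [posterior, withDensity_apply _ MeasurableSet.univ, setLIntegral_univ,
    ← ofReal_integral_eq_lintegral_ofReal (hf_int.div_const _)
      (hf_nonneg.mono fun z hz => div_nonneg hz hf_ev_pos.le),
    integral_div, div_self hf_ev_pos.ne', ENNReal.ofReal_one]

lemma llr_posterior_ae_eq [SigmaFinite p₀] [SigmaFinite q] (hf_meas : Measurable f)
    (hqp : q ≪ p₀) (hf_ev_pos : 0 < ∫ z, f z ∂p₀) (hf_pos : ∀ᵐ z ∂q, 0 < f z) :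
    llr q (posterior p₀ f) =ᵐ[q]
      fun z => llr q p₀ z - Real.log (f z) + Real.log (∫ z, f z ∂p₀) := by
  filter_upwards [llr_withDensity_right_ae_eq (hf_meas.div_const _).ennreal_ofReal hqp
      (ae_ofReal_div_ne_zero hf_ev_pos hf_pos) (ae_of_all _ fun _ => ENNReal.ofReal_ne_top),
    hf_pos] with z hz hfz
  rw [posterior, hz, ENNReal.toReal_ofReal (div_pos hfz hf_ev_pos).le,
    Real.log_div hfz.ne' hf_ev_pos.ne']
  ring

lemma klReal_posterior [IsProbabilityMeasure q] [SigmaFinite p₀] (hf_meas : Measurable f)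
    (hqp : q ≪ p₀) (hf_ev_pos : 0 < ∫ z, f z ∂p₀) (hf_pos : ∀ᵐ z ∂q, 0 < f z)
    (hlogf_int : Integrable (fun z => Real.log (f z)) q) (hllr_int : Integrable (llr q p₀) q) :
    klReal q (posterior p₀ f) =
      klReal q p₀ - ∫ z, Real.log (f z) ∂q + Real.log (∫ z, f z ∂p₀) := by
  have h_diff_int : Integrable (fun z => llr q p₀ z - Real.log (f z)) q :=
    hllr_int.sub hlogf_int
  rw [klReal, ← llr_def, integral_congr_ae (llr_posterior_ae_eq hf_meas hqp hf_ev_pos hf_pos),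
    integral_add h_diff_int (integrable_const _), integral_sub hllr_int hlogf_int,
    integral_const, probReal_univ, one_smul, klReal, llr_def]

end Posterior

/-- `q ≪ π`, `log (dq/dπ)` is `q`-integrable, the gap `log ∫ f dp₀ − ELBO` equals
`KL(q‖π)`, and the bound is tight iff `KL(q‖π) = 0` iff `q = π`. -/
theorem stmt_3 {Z : Type*} [MeasurableSpace Z] (p₀ q : Measure Z)
    [IsProbabilityMeasure p₀] [IsProbabilityMeasure q] (hqp : q ≪ p₀)
    (f : Z → ℝ) (hf_meas : Measurable f) (hf_nonneg : ∀ z, 0 ≤ f z)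
    (hf_int : Integrable f p₀) (hf_ev_pos : 0 < ∫ z, f z ∂p₀)
    (hf_pos : ∀ᵐ z ∂q, 0 < f z)
    (hlogf_int : Integrable (fun z => Real.log (f z)) q)
    (hlogr_int : Integrable (fun z => Real.log ((q.rnDeriv p₀) z).toReal) q) :
    q ≪ posterior p₀ f ∧
    Integrable (fun z => Real.log ((q.rnDeriv (posterior p₀ f)) z).toReal) q ∧
    Real.log (∫ z, f z ∂p₀) - (∫ z, Real.log (f z) ∂q - klReal q p₀) =
      klReal q (posterior p₀ f) ∧
    ((∫ z, Real.log (f z) ∂q - klReal q p₀ = Real.log (∫ z, f z ∂p₀)) ↔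
      klReal q (posterior p₀ f) = 0) ∧
    (klReal q (posterior p₀ f) = 0 ↔ q = posterior p₀ f) := by
  have := isProbabilityMeasure_posterior (ae_of_all _ hf_nonneg) hf_int hf_ev_pos
  have hqπ : q ≪ posterior p₀ f :=
    absolutelyContinuous_withDensity_of_ae_ne_zero (hf_meas.div_const _).ennreal_ofReal hqp
      (ae_ofReal_div_ne_zero hf_ev_pos hf_pos)
  have h_llr := llr_posterior_ae_eq hf_meas hqp hf_ev_pos hf_pos
  have h_int : Integrable (llr q (posterior p₀ f)) q :=
    ((hlogr_int.sub hlogf_int).add (integrable_const _)).congr h_llr.symm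
  have h_kl := klReal_posterior hf_meas hqp hf_ev_pos hf_pos hlogf_int hlogr_int
  refine ⟨hqπ, h_int, by rw [h_kl]; ring, by constructor <;> intro <;> linarith, ?_⟩
  exact klReal_eq_zero_iff hqπ (by simp) h_int
end
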